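/- Let X_1, …, X_d be linear subspaces of P^n over a field k whose pairwise intersections have dimension at most one, with ideal sheaves I_1, …, I_d; let I be the ideal sheaf of X = X_1 ∪ ⋯ ∪ X_d and J = I_1 ⋯ I_d. For a line L contained in the support of I/J, set J_L' = ∏_{X_i ⊉ L} I_i and I_L = the ideal sheaf of ∪_{X_i ⊇ L} X_i. Then the support of the quotient sheaf (I_L · J_L')/J is contained in L. -/

import Mathlib

/-! Common setup: the projective space `ℙⁿ_k` as the projective spectrum of the
standard graded polynomial ring `k[x₀, …, xₙ]`, graded modules over this ring,
the associated (twisted) sheaves of abelian groups `~M(d)`, sheaf cohomology,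
supports, dimensions, and Castelnuovo–Mumford regularity (both for sheaves, via
cohomology vanishing, and for graded modules, via graded free resolutions). -/

open CategoryTheory AlgebraicGeometry TopologicalSpace Opposite

noncomputable section

attribute [local instance] MvPolynomial.gradedAlgebra

/-- The homogeneous coordinate ring `S = k[x₀, …, xₙ]` of `ℙⁿ_k`. -/
abbrev PolyRing (k : Type) [Field k] (n : ℕ) : Type := MvPolynomial (Fin (n+1)) k

/-- The standard grading on `k[x₀, …, xₙ]`. -/
abbrev polyGrading (k : Type) [Field k] (n : ℕ) : ℕ → Submodule k (PolyRing k n) :=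
  MvPolynomial.homogeneousSubmodule (Fin (n+1)) k

/-- The underlying space of `ℙⁿ_k`: homogeneous relevant primes of `k[x₀, …, xₙ]`. -/
abbrev PSpace (k : Type) [Field k] (n : ℕ) : Type :=
  ProjectiveSpectrum (polyGrading k n)

variable {k : Type} [Field k] {n : ℕ}

/-- The degree-`j` homogeneous part of `S` (trivial in negative degrees),
as an additive subgroup. -/
def homogPiece (k : Type) [Field k] (n : ℕ) (j : ℤ) : AddSubgroup (PolyRing k n) :=
  if 0 ≤ j then (polyGrading k n j.toNat).toAddSubgroup else ⊥

/-- A (ℤ-)graded module over `S = k[x₀, …, xₙ]`: a module together with a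
distinguished family of additive subgroups, its homogeneous components. -/
structure GradedSMod (k : Type) [Field k] (n : ℕ) where
  carrier : Type
  [isAddCommGroup : AddCommGroup carrier]
  [isModule : Module (PolyRing k n) carrier]
  grading : ℤ → AddSubgroup carrier

attribute [instance] GradedSMod.isAddCommGroup GradedSMod.isModule

/-- The family of homogeneous components is an honest grading on the module:
the components decompose the module as a direct sum, and multiplication by a
homogeneous polynomial of degree `i` sends the degree `j` part into the degree
`i + j` part. -/
def GradedSMod.IsGrading (M : GradedSMod k n) : Prop :=
  DirectSum.IsInternal M.grading ∧
    ∀ (i : ℕ) (j : ℤ) (a : PolyRing k n) (x : M.carrier),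
      a ∈ polyGrading k n i → x ∈ M.grading j → a • x ∈ M.grading (i + j)

/-- A graded module is coherent if it is finitely generated (its associated
sheaf on `ℙⁿ` is then a coherent sheaf). -/
def GradedSMod.IsCoherent (M : GradedSMod k n) : Prop :=
  Module.Finite (PolyRing k n) M.carrier

/-- The localization of (the underlying module of) `M` at a point `x` of `ℙⁿ`. -/
abbrev LocAt (M : GradedSMod k n) (x : PSpace k n) : Type :=
  LocalizedModule x.asHomogeneousIdeal.toIdeal.primeCompl M.carrier

/-- The predicate asserting that a family of germs over an open set `U` is
locally a homogeneous fraction `m / b` of total degree `d` (with `m` a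
homogeneous element of `M` and `b` a homogeneous polynomial not vanishing
at the points in question). This is the usual local description of the
sections of the twisted sheaf `~M(d)` on `ℙⁿ`. -/
def IsLocalFraction (M : GradedSMod k n) (d : ℤ) {U : Opens (PSpace k n)}
    (f : ∀ x : U, LocAt M x.1) : Prop :=
  ∀ x : U, ∃ (V : Opens (PSpace k n)) (_ : x.1 ∈ V) (hVU : V ≤ U)
    (l : ℕ) (m : M.carrier) (b : PolyRing k n),
      m ∈ M.grading (d + l) ∧ b ∈ polyGrading k n l ∧
      ∀ y : V, ∃ hb : b ∈ y.1.asHomogeneousIdeal.toIdeal.primeCompl,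
        f ⟨y.1, hVU y.2⟩ = LocalizedModule.mk m ⟨b, hb⟩

/-- The sections of the presheaf underlying `~M(d)` over `U`: the additive
subgroup generated by the families of germs which are locally homogeneous
fractions of total degree `d`. -/
def tildeSections (M : GradedSMod k n) (d : ℤ) (U : Opens (PSpace k n)) :
    AddSubgroup (∀ x : U, LocAt M x.1) :=
  AddSubgroup.closure {f | IsLocalFraction M d f}

/-- Restriction of families of germs along an inclusion of open sets. -/
def resFun (M : GradedSMod k n) {U V : Opens (PSpace k n)} (h : V ≤ U) :
    (∀ x : U, LocAt M x.1) →+ (∀ x : V, LocAt M x.1) where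
  toFun f x := f ⟨x.1, h x.2⟩
  map_zero' := rfl
  map_add' _ _ := rfl

lemma isLocalFraction_res (M : GradedSMod k n) (d : ℤ) {U V : Opens (PSpace k n)}
    (h : V ≤ U) {f : ∀ x : U, LocAt M x.1} (hf : IsLocalFraction M d f) :
    IsLocalFraction M d (resFun M h f) := by
  intro x
  obtain ⟨W, hxW, hWU, l, m, b, hm, hb, hfrac⟩ := hf ⟨x.1, h x.2⟩
  refine ⟨W ⊓ V, ⟨hxW, x.2⟩, inf_le_right, l, m, b, hm, hb, ?_⟩
  intro y
  obtain ⟨hb', heq⟩ := hfrac ⟨y.1, y.2.1⟩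
  exact ⟨hb', heq⟩

lemma res_mem_tildeSections (M : GradedSMod k n) (d : ℤ) {U V : Opens (PSpace k n)}
    (h : V ≤ U) {f : ∀ x : U, LocAt M x.1} (hf : f ∈ tildeSections M d U) :
    resFun M h f ∈ tildeSections M d V := by
  have : tildeSections M d U ≤ (tildeSections M d V).comap (resFun M h) :=
    (AddSubgroup.closure_le _).2
      (fun g hg => AddSubgroup.subset_closure (isLocalFraction_res M d h hg))
  exact this hf

/-- The restriction homomorphism for the presheaf underlying `~M(d)`. -/
def resSectionsHom (M : GradedSMod k n) (d : ℤ) {U V : Opens (PSpace k n)} (h : V ≤ U) :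
    tildeSections M d U →+ tildeSections M d V :=
  AddMonoidHom.mk' (fun f => ⟨resFun M h f.1, res_mem_tildeSections M d h f.2⟩)
    (fun _ _ => Subtype.ext rfl)

/-- The presheaf of abelian groups underlying the twisted sheaf `~M(d)` on `ℙⁿ`. -/
def tildePresheaf (M : GradedSMod k n) (d : ℤ) :
    TopCat.Presheaf AddCommGrpCat.{0} (TopCat.of (PSpace k n)) where
  obj U := AddCommGrpCat.of (tildeSections M d U.unop)
  map {U V} i := AddCommGrpCat.ofHom (resSectionsHom M d i.unop.le)
  map_id U := by
    ext f
    rfl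
  map_comp f g := by
    ext x
    rfl

/-- The twisted sheaf `~M(d)` on `ℙⁿ` associated to a graded module `M`:
the sheafification of the presheaf of locally homogeneous fractions of total
degree `d`. For `d = 0` this is the usual associated sheaf `~M`; for
`M = S` it is the Serre twisting sheaf `O(d)`. -/
def tilde (M : GradedSMod k n) (d : ℤ) :
    TopCat.Sheaf AddCommGrpCat.{0} (TopCat.of (PSpace k n)) :=
  (presheafToSheaf (Opens.grothendieckTopology (TopCat.of (PSpace k n)))
    AddCommGrpCat).obj (tildePresheaf M d)

/-- The derived category instance used to define sheaf cohomology. -/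
def derCatSheaf (X : TopCat.{0}) :
    HasDerivedCategory.{1} (Sheaf (Opens.grothendieckTopology X) AddCommGrpCat.{0}) :=
  HasDerivedCategory.standard _

/-- Sheaf cohomology `Hⁱ(ℙⁿ, F)` of a sheaf of abelian groups on `ℙⁿ`. -/
def sheafCohomology (F : TopCat.Sheaf AddCommGrpCat.{0} (TopCat.of (PSpace k n))) (i : ℕ) :
    Type 1 :=
  letI := derCatSheaf (TopCat.of (PSpace k n))
  letI : HasExt.{1}
      (Sheaf (Opens.grothendieckTopology (TopCat.of (PSpace k n))) AddCommGrpCat.{0}) :=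
    hasExt_of_hasDerivedCategory _
  Sheaf.H F i

/-- A graded module `M` is `r`-regular as a sheaf on `ℙⁿ` (i.e. its associated
coherent sheaf `F = ~M` is `r`-regular in the sense of Castelnuovo–Mumford:
`Hⁱ(ℙⁿ, F(r - i)) = 0` for all `i > 0`). -/
def IsSheafRegular (M : GradedSMod k n) (r : ℤ) : Prop :=
  ∀ i : ℕ, 0 < i → Subsingleton (sheafCohomology (tilde M (r - i)) i)

/-- The support of a sheaf of abelian groups:  points with nontrivial stalk. -/
def sheafSupport (F : TopCat.Sheaf AddCommGrpCat.{0} (TopCat.of (PSpace k n))) :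
    Set (PSpace k n) :=
  {x : PSpace k n | Nontrivial ((F.presheaf.stalk x : AddCommGrpCat.{0}))}

/-- Dimension of a subset of `ℙⁿ` (its topological Krull dimension). -/
def dimOfSet (s : Set (PSpace k n)) : WithBot ℕ∞ :=
  topologicalKrullDim s

/-- The zero locus in `ℙⁿ` of a homogeneous ideal. -/
abbrev pZeroLocus (I : Ideal (PolyRing k n)) : Set (PSpace k n) :=
  ProjectiveSpectrum.zeroLocus (polyGrading k n) (I : Set (PolyRing k n))

end

/-! ### Constructions of graded modules -/

noncomputable section
open CategoryTheory AlgebraicGeometry TopologicalSpace Opposite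

attribute [local instance] MvPolynomial.gradedAlgebra

variable {k : Type} [Field k] {n : ℕ}

/-- A (homogeneous) ideal `I ⊆ S`, viewed as a graded `S`-module; for a
homogeneous ideal, `tilde (ofIdeal I) 0` is the corresponding ideal sheaf on `ℙⁿ`. -/
def ofIdeal (I : Ideal (PolyRing k n)) : GradedSMod k n where
  carrier := I
  grading j := (homogPiece k n j).comap I.subtype.toAddMonoidHom

/-- A submodule of (the underlying module of) a graded module, with the induced
grading. -/
def subGM (M : GradedSMod k n) (p : Submodule (PolyRing k n) M.carrier) : GradedSMod k n where
  carrier := p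
  grading j := (M.grading j).comap p.subtype.toAddMonoidHom

/-- A quotient of a graded module by a submodule, with the induced grading. -/
def quotByGM (M : GradedSMod k n) (p : Submodule (PolyRing k n) M.carrier) : GradedSMod k n where
  carrier := M.carrier ⧸ p
  grading j := (M.grading j).map p.mkQ.toAddMonoidHom

/-- The tensor product `M ⊗_S N` of graded modules, with the induced grading
(the degree `j` part is generated by tensors of homogeneous elements whose
degrees sum to `j`).  Under `tilde`, this corresponds to the tensor product
`~M ⊗_{O_{ℙⁿ}} ~N` of the associated sheaves of `O_{ℙⁿ}`-modules. -/
def tensorGM (M N : GradedSMod k n) : GradedSMod k n where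
  carrier := TensorProduct (PolyRing k n) M.carrier N.carrier
  grading j := AddSubgroup.closure
    {x | ∃ (a b : ℤ) (m : M.carrier) (nn : N.carrier), a + b = j ∧
      m ∈ M.grading a ∧ nn ∈ N.grading b ∧ x = m ⊗ₜ[PolyRing k n] nn}

/-- A degree-preserving `S`-linear map of graded modules. -/
def IsGradedHom (M N : GradedSMod k n) (φ : M.carrier →ₗ[PolyRing k n] N.carrier) : Prop :=
  ∀ (j : ℤ) (x : M.carrier), x ∈ M.grading j → φ x ∈ N.grading j

/-- The image of a graded map, with the induced grading; `tilde (imageGM φ) 0`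
is the image sheaf of the associated map of sheaves. -/
def imageGM {M N : GradedSMod k n} (φ : M.carrier →ₗ[PolyRing k n] N.carrier) :
    GradedSMod k n :=
  subGM N (LinearMap.range φ)

/-- The homology `ker φ / im ψ` at the middle of `M₂ → M₁ → M₀`, with its
induced grading. -/
def homologyGM {M₂ M₁ M₀ : GradedSMod k n}
    (ψ : M₂.carrier →ₗ[PolyRing k n] M₁.carrier)
    (φ : M₁.carrier →ₗ[PolyRing k n] M₀.carrier) : GradedSMod k n :=
  quotByGM (subGM M₁ (LinearMap.ker φ))
    (Submodule.comap (LinearMap.ker φ).subtype (LinearMap.range ψ))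

/-- The quotient `I/J` of an ideal by (its intersection with) a smaller ideal,
as a graded module; for `J ≤ I`, `tilde (quotIdealGM I J) 0` is the quotient
sheaf `~I / ~J`. -/
def quotIdealGM (I J : Ideal (PolyRing k n)) : GradedSMod k n :=
  quotByGM (ofIdeal I) (Submodule.comap I.subtype J)

/-! ### Free graded resolutions and Castelnuovo–Mumford regularity of modules -/

/-- The component entries of a map between (twisted) free graded modules are
homogeneous of the appropriate degrees: the entry relating a generator of
degree `e₁ i` to a generator of degree `e₂ j` is homogeneous of degree
`e₁ i - e₂ j`.  This expresses that the map is a degree-preserving map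
`⊕ S(-e₁ i) → ⊕ S(-e₂ j)`. -/
def IsGradedFreeMap {ι₁ ι₂ : Type} (e₁ : ι₁ → ℤ) (e₂ : ι₂ → ℤ)
    (φ : (ι₁ →₀ PolyRing k n) →ₗ[PolyRing k n] (ι₂ →₀ PolyRing k n)) : Prop :=
  ∀ (i : ι₁) (j : ι₂), φ (Finsupp.single i 1) j ∈ homogPiece k n (e₁ i - e₂ j)

/-- A resolution `⋯ → F₂ → F₁ → F₀ → M → 0` of a graded module `M` by free
graded modules `Fₜ = ⊕_{i : idx t} S(-deg t i)`, with degree-preserving maps. -/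
structure FreeResolution (M : GradedSMod k n) where
  /-- index set of the free generators in homological degree `t` -/
  idx : ℕ → Type
  /-- internal degrees of the free generators -/
  deg : ∀ t, idx t → ℤ
  /-- differentials -/
  d : ∀ t, ((idx (t+1)) →₀ PolyRing k n) →ₗ[PolyRing k n] ((idx t) →₀ PolyRing k n)
  /-- augmentation `F₀ → M` -/
  aug : ((idx 0) →₀ PolyRing k n) →ₗ[PolyRing k n] M.carrier
  graded_d : ∀ t, IsGradedFreeMap (deg (t+1)) (deg t) (d t)
  graded_aug : ∀ i, aug (Finsupp.single i 1) ∈ M.grading (deg 0 i)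
  surj_aug : Function.Surjective aug
  exact_aug : Function.Exact (d 0) aug
  exact_d : ∀ t, Function.Exact (d (t+1)) (d t)

/-- A free graded resolution is minimal if all entries of the differentials lie
in the irrelevant maximal ideal `(x₀, …, xₙ)`, i.e. have vanishing constant
term, and it has finitely many generators in each homological degree. -/
def FreeResolution.IsMinimal {M : GradedSMod k n} (R : FreeResolution M) : Prop :=
  (∀ t, Finite (R.idx t)) ∧
    ∀ (t : ℕ) (i : R.idx (t+1)) (j : R.idx t),
      MvPolynomial.constantCoeff (R.d t (Finsupp.single i 1) j) = 0

/-- The generators of the `t`-th term of the resolution all have degrees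
at most `m + t`. -/
def FreeResolution.DegreeBound {M : GradedSMod k n} (R : FreeResolution M) (m : ℤ) : Prop :=
  ∀ (t : ℕ) (i : R.idx t), R.deg t i ≤ m + t

/-- `M` is `m`-regular in the sense of Castelnuovo–Mumford: it admits a free
graded resolution whose `t`-th term is generated in degrees `≤ m + t`
(equivalently, the minimal free resolution has this property). -/
def IsModuleRegular (M : GradedSMod k n) (m : ℤ) : Prop :=
  ∃ R : FreeResolution M, R.DegreeBound m

/-- The Castelnuovo–Mumford regularity of a graded module: the least `m`
such that `M` is `m`-regular. -/
def moduleReg (M : GradedSMod k n) : ℤ :=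
  sInf {m : ℤ | IsModuleRegular M m}

/-! ### Ideals: saturation, linearity, global sections -/

/-- An ideal of `S` is saturated (with respect to the irrelevant maximal
ideal). Saturated homogeneous ideals correspond bijectively to ideal sheaves
of closed subschemes of `ℙⁿ`. -/
def IsSaturatedIdeal (I : Ideal (PolyRing k n)) : Prop :=
  ∀ f : PolyRing k n, (∀ i : Fin (n+1), MvPolynomial.X i * f ∈ I) → f ∈ I

/-- An ideal defining a linear subspace of `ℙⁿ`: an ideal generated by
homogeneous polynomials of degree 1. -/
def IsLinearIdeal (I : Ideal (PolyRing k n)) : Prop :=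
  ∃ T : Set (PolyRing k n), T ⊆ (polyGrading k n 1 : Set (PolyRing k n)) ∧ I = Ideal.span T

/-- The degree-`d` graded piece of an ideal `I ⊆ S`. -/
def degreePiece (I : Ideal (PolyRing k n)) (d : ℤ) : Type :=
  {f : PolyRing k n // f ∈ I ∧ f ∈ homogPiece k n d}

/-- The natural map from the degree-`d` part of an ideal `I` to the global
sections `H⁰(ℙⁿ, ~I(d))` of the twisted ideal sheaf, sending a homogeneous
element `f` of degree `d` of `I` to the global fraction `f/1`. -/
def toGlobalSections (I : Ideal (PolyRing k n)) (d : ℤ) (f : degreePiece I d) :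
    ((tilde (ofIdeal I) d).val.obj (op ⊤)) :=
  ((sheafificationAdjunction (Opens.grothendieckTopology (TopCat.of (PSpace k n)))
      AddCommGrpCat.{0}).unit.app (tildePresheaf (ofIdeal I) d)).app (op ⊤)
    (⟨fun y => LocalizedModule.mk ⟨f.1, f.2.1⟩ 1, by
      apply AddSubgroup.subset_closure
      intro x
      refine ⟨⊤, trivial, le_rfl, 0, ⟨f.1, f.2.1⟩, 1, ?_, ?_, ?_⟩
      · show f.1 ∈ homogPiece k n (d + (0:ℕ))
        simpa using f.2.2
      · exact (MvPolynomial.mem_homogeneousSubmodule _ _).2 (MvPolynomial.isHomogeneous_one (Fin (n+1)) k)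
      · intro y
        exact ⟨y.1.asHomogeneousIdeal.toIdeal.primeCompl.one_mem, rfl⟩⟩ :
        tildeSections (ofIdeal I) d ⊤)

end

/-! At a point `y` off the line `L`, no two of the subspaces `Xᵢ, Xⱼ ⊇ L` pass through `y`:
`Iᵢ + Iⱼ` is generated by linear forms, hence prime, so `Xᵢ ∩ Xⱼ` would be an irreducible
closed set containing `L` and `y ∉ L`, of dimension at least two. Thus the `Iᵢ` with `Xᵢ ⊇ L`
are pairwise comaximal at `y`, so their intersection `I_L` equals their product there, and
`I_L · J_L' = J` locally at `y`: the quotient has zero stalks off `L`. -/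

namespace MvPolynomial

variable {σ k : Type*} [Field k]

theorem isPrime_span_of_subset_homogeneousSubmodule_one {T : Set (MvPolynomial σ k)}
    (hT : T ⊆ homogeneousSubmodule σ k 1) : (Ideal.span T).IsPrime := by
  obtain ⟨C, hWC⟩ := Submodule.exists_isCompl (Submodule.span k T)
  set π := (Submodule.span k T).projection C hWC
  have hπ_mem : ∀ f, π f ∈ Ideal.span T := fun f =>
    (Submodule.span_le (p := (Ideal.span T).restrictScalars k)).2 Ideal.subset_span
      (Submodule.projection_apply_mem hWC f)
  -- `ev` is the identity modulo `Ideal.span T`, and on linear forms it is the projection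
  -- along `span k T`; hence its kernel is `Ideal.span T`.
  set ev : MvPolynomial σ k →ₐ[k] MvPolynomial σ k := aeval fun i => X i - π (X i)
  have ev_linear : ∀ v ∈ Submodule.span k (Set.range X), ev v = v - π v := fun v hv => by
    have := LinearMap.eqOn_span (f := ev.toLinearMap) (g := LinearMap.id - π)
      (by rintro _ ⟨i, rfl⟩; simp [ev]) hv
    rwa [LinearMap.sub_apply, LinearMap.id_apply] at this
  have ev_span : ∀ w ∈ Submodule.span k T, ev w = 0 := fun w hw => by
    have hw_linear : w ∈ Submodule.span k (Set.range X) := by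
      rw [← homogeneousSubmodule_one_eq_span_X]
      exact Submodule.span_le.2 hT hw
    rw [ev_linear w hw_linear, Submodule.projection_apply_of_mem_left hWC hw, sub_self]
  have mk_comp_ev : (Ideal.Quotient.mkₐ k (Ideal.span T)).comp ev = Ideal.Quotient.mkₐ k _ :=
    algHom_ext fun i => by
      simpa [ev, Ideal.Quotient.eq, Ideal.Quotient.eq_zero_iff_mem] using hπ_mem (X i)
  have ker_ev : RingHom.ker ev = Ideal.span T := by
    refine le_antisymm (fun f hf => ?_)
      (Ideal.span_le.2 fun t ht => ev_span t (Submodule.subset_span ht))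
    rw [← Ideal.Quotient.eq_zero_iff_mem, ← Ideal.Quotient.mkₐ_eq_mk k, ← mk_comp_ev]
    simp [RingHom.mem_ker.1 hf]
  rw [← ker_ev]
  exact RingHom.ker_isPrime _

end MvPolynomial

namespace Ideal

variable {R ι : Type*} [CommRing R]

theorem sup_mul_inf_le (I J : Ideal R) : (I ⊔ J) * (I ⊓ J) ≤ I * J := by
  rw [sup_mul]
  exact sup_le (mul_mono_right inf_le_right) (mul_comm J I ▸ mul_mono_right inf_le_left)

/-- Ideals that are pairwise comaximal at a prime `p` have, locally at `p`, their product equal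
to their intersection. -/
theorem exists_notMem_span_singleton_mul_iInf_le_prod {p : Ideal R} [p.IsPrime]
    (a : ι → Ideal R) (T : Finset ι)
    (h : (T : Set ι).Pairwise fun i j => ¬ a i ⊔ a j ≤ p) :
    ∃ s ∉ p, span {s} * ⨅ i ∈ T, a i ≤ ∏ i ∈ T, a i := by
  classical
  induction T using Finset.induction_on with
  | empty => exact ⟨1, p.ne_top_iff_one.1 IsPrime.ne_top', by simp⟩
  | insert j T hj ih =>
    obtain ⟨s, hs, hsT⟩ := ih (h.mono (by simp))
    have hjT : ¬ a j ⊔ ∏ i ∈ T, a i ≤ p := fun hle => by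
      obtain ⟨i, hi, hip⟩ := (IsPrime.prod_le ‹_›).1 (le_sup_right.trans hle)
      exact h (by simp) (by simp [hi]) (by rintro rfl; exact hj hi)
        (sup_le (le_sup_left.trans hle) hip)
    obtain ⟨u, hu, hup⟩ := SetLike.not_le_iff_exists.1 hjT
    refine ⟨u * s, fun hus => (‹p.IsPrime›.mem_or_mem hus).elim hup hs, ?_⟩
    rw [Finset.iInf_insert, Finset.prod_insert hj, ← span_singleton_mul_span_singleton, mul_assoc]
    calc span {u} * (span {s} * (a j ⊓ ⨅ i ∈ T, a i))
        ≤ (a j ⊔ ∏ i ∈ T, a i) * (a j ⊓ ∏ i ∈ T, a i) :=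
          mul_le_mul' ((span_singleton_le_iff_mem _).2 hu)
            (le_inf (mul_le_right.trans inf_le_left) ((mul_mono_right inf_le_right).trans hsT))
      _ ≤ a j * ∏ i ∈ T, a i := sup_mul_inf_le _ _

end Ideal

open TopologicalSpace in
theorem topologicalKrullDim_add_one_le_of_ssubset {X : Type*} [TopologicalSpace X]
    {Y Z : Set X} (hY : IsClosed Y) (hZ : IsIrreducible Z) (hYZ : Y ⊂ Z) :
    topologicalKrullDim Y + 1 ≤ topologicalKrullDim Z := by
  cases isEmpty_or_nonempty (IrreducibleCloseds Y) with
  | inl _ => simp [topologicalKrullDim, Order.krullDim_eq_bot]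
  | inr _ =>
    have : IrreducibleSpace Z := Subtype.irreducibleSpace hZ
    let ι : Y → Z := Set.inclusion hYZ.subset
    have hι : Topology.IsInducing ι := .of_comp (continuous_inclusion _) continuous_subtype_val
      Topology.IsInducing.subtypeVal
    have hι_range : IsClosed (Set.range ι) := by
      rw [Set.range_inclusion]; exact hY.preimage continuous_subtype_val
    obtain ⟨z, hzZ, hzY⟩ := Set.exists_of_ssubset hYZ
    let univ : IrreducibleCloseds Z :=
      ⟨Set.univ, IrreducibleSpace.isIrreducible_univ _, isClosed_univ⟩
    -- Appending `Z` itself to the image of a chain of `Y` gives a longer chain of `Z`.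
    let f : WithTop (IrreducibleCloseds Y) → IrreducibleCloseds Z :=
      fun c => Option.elim c univ (IrreducibleCloseds.map ι hι.continuous)
    have hf : StrictMono f := by
      refine WithTop.strictMono_iff.2 ⟨IrreducibleCloseds.map_strictMono_of_isInducing hι,
        fun c => lt_of_le_of_ne (Set.subset_univ _) fun h => hzY ?_⟩
      have : (⟨z, hzZ⟩ : Z) ∈ Set.range ι :=
        closure_minimal (Set.image_subset_range _ _) hι_range ((SetLike.ext_iff.1 h _).2 trivial)
      simpa [ι] using this
    simpa [topologicalKrullDim] using Order.krullDim_le_of_strictMono f hf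

theorem ProjectiveSpectrum.isIrreducible_zeroLocus_of_isPrime {A σ : Type*} [CommRing A]
    [SetLike σ A] [AddSubmonoidClass σ A] {𝒜 : ℕ → σ} [GradedRing 𝒜] (q : HomogeneousIdeal 𝒜)
    (hq : q.toIdeal.IsPrime) (x : ProjectiveSpectrum 𝒜) (hqx : q ≤ x.asHomogeneousIdeal) :
    IsIrreducible (zeroLocus 𝒜 (q : Set A)) := by
  let y : ProjectiveSpectrum 𝒜 := ⟨q, hq, fun h => x.not_irrelevant_le (h.trans hqx)⟩
  have : zeroLocus 𝒜 (q : Set A) = closure {y} := by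
    rw [← zeroLocus_vanishingIdeal_eq_closure, vanishingIdeal_singleton]
  exact this ▸ isIrreducible_singleton.closure

theorem TopCat.Presheaf.subsingleton_stalk_of_subsingleton_obj {X : TopCat}
    {F : X.Presheaf AddCommGrpCat} {U : TopologicalSpace.Opens X}
    (hU : ∀ V ≤ U, Subsingleton (F.obj (Opposite.op V))) {x : X} (hx : x ∈ U) :
    Subsingleton (F.stalk x) := by
  have germ_eq_zero : ∀ t : F.stalk x, t = 0 := fun t => by
    obtain ⟨W, hxW, s, rfl⟩ := F.exists_germ_eq t
    have := hU (W ⊓ U) inf_le_right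
    rw [← F.germ_res_apply (CategoryTheory.homOfLE inf_le_left) x ⟨hxW, hx⟩ s,
      Subsingleton.elim (F.map _ s) 0, map_zero]
  exact ⟨fun a b => (germ_eq_zero a).trans (germ_eq_zero b).symm⟩

noncomputable section
open CategoryTheory AlgebraicGeometry TopologicalSpace Opposite
attribute [local instance] MvPolynomial.gradedAlgebra

variable {k : Type} [Field k] {n : ℕ}

namespace IsLinearIdeal

variable {a b : Ideal (PolyRing k n)}

theorem isPrime (ha : IsLinearIdeal a) : a.IsPrime := by
  obtain ⟨T, hT, rfl⟩ := ha
  exact MvPolynomial.isPrime_span_of_subset_homogeneousSubmodule_one hT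

theorem isHomogeneous (ha : IsLinearIdeal a) : a.IsHomogeneous (polyGrading k n) := by
  obtain ⟨T, hT, rfl⟩ := ha
  exact Ideal.homogeneous_span _ _ fun t ht => ⟨1, hT ht⟩

theorem sup (ha : IsLinearIdeal a) (hb : IsLinearIdeal b) : IsLinearIdeal (a ⊔ b) := by
  obtain ⟨T, hT, rfl⟩ := ha
  obtain ⟨T', hT', rfl⟩ := hb
  exact ⟨T ∪ T', Set.union_subset hT hT', (Ideal.span_union T T').symm⟩

theorem sup_not_le_of_notMem_zeroLocus (ha : IsLinearIdeal a) (hb : IsLinearIdeal b)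
    (hdim : dimOfSet (pZeroLocus a ∩ pZeroLocus b) ≤ 1) {ℓ : Ideal (PolyRing k n)}
    (hℓ : 1 ≤ dimOfSet (pZeroLocus ℓ)) (haℓ : a ≤ ℓ) (hbℓ : b ≤ ℓ) {y : PSpace k n}
    (hy : y ∉ pZeroLocus ℓ) : ¬ a ⊔ b ≤ y.asHomogeneousIdeal.toIdeal := by
  intro hle
  have hab := ha.sup hb
  have hirr : IsIrreducible (pZeroLocus (a ⊔ b)) :=
    ProjectiveSpectrum.isIrreducible_zeroLocus_of_isPrime ⟨a ⊔ b, hab.isHomogeneous⟩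
      hab.isPrime y hle
  have hℓ_ssubset : pZeroLocus ℓ ⊂ pZeroLocus (a ⊔ b) :=
    ⟨ProjectiveSpectrum.zeroLocus_anti_mono_ideal _ (sup_le haℓ hbℓ), fun h => hy (h hle)⟩
  have h2 : (2 : WithBot ℕ∞) ≤ 1 := calc
    (2 : WithBot ℕ∞) = 1 + 1 := rfl
    _ ≤ dimOfSet (pZeroLocus ℓ) + 1 := by gcongr
    _ ≤ dimOfSet (pZeroLocus (a ⊔ b)) :=
      topologicalKrullDim_add_one_le_of_ssubset (ProjectiveSpectrum.isClosed_zeroLocus _ _)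
        hirr hℓ_ssubset
    _ ≤ 1 := by rwa [← ProjectiveSpectrum.zeroLocus_sup_ideal] at hdim
  exact absurd h2 (by decide)

end IsLinearIdeal

theorem sheafSupport_tilde_subset {M : GradedSMod k n} {d : ℤ} {Z : Set (PSpace k n)}
    (hZ : IsClosed Z) (hM : ∀ y ∉ Z, Subsingleton (LocAt M y)) :
    sheafSupport (tilde M d) ⊆ Z := by
  intro x hx
  by_contra hxZ
  have hsections : ∀ V ≤ (⟨Zᶜ, hZ.isOpen_compl⟩ : Opens (PSpace k n)),
      Subsingleton ((tildePresheaf M d).obj (op V)) := fun V hV =>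
    have := fun y : V => hM y.1 (hV y.2)
    (inferInstance : Subsingleton (tildeSections M d V))
  have := TopCat.Presheaf.stalkFunctor_map_unit_toSheafify_isIso x AddCommGrpCat
    (tildePresheaf M d)
  let e := (asIso ((TopCat.Presheaf.stalkFunctor AddCommGrpCat x).map
    (toSheafify (Opens.grothendieckTopology _) (tildePresheaf M d)))).addCommGroupIsoToAddEquiv
  exact not_nontrivial_iff_subsingleton.2 (@Equiv.subsingleton _ _ e.symm.toEquiv
    (TopCat.Presheaf.subsingleton_stalk_of_subsingleton_obj hsections hxZ)) hx

theorem subsingleton_locAt_quotIdealGM {a b : Ideal (PolyRing k n)} (y : PSpace k n)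
    {s : PolyRing k n} (hs : s ∉ y.asHomogeneousIdeal) (h : Ideal.span {s} * a ≤ b) :
    Subsingleton (LocAt (quotIdealGM a b) y) := by
  rw [LocalizedModule.subsingleton_iff]
  intro m
  obtain ⟨⟨f, hf⟩, rfl⟩ := Submodule.Quotient.mk_surjective _ m
  exact ⟨s, hs, (Submodule.Quotient.mk_eq_zero _).2
    (h (Ideal.mul_mem_mul (Ideal.mem_span_singleton_self s) hf))⟩

end

noncomputable section
open CategoryTheory AlgebraicGeometry TopologicalSpace Opposite
attribute [local instance] MvPolynomial.gradedAlgebra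

open scoped Classical
theorem support_of_line_approximation_general
    {k : Type} [Field k] {n : ℕ} (d : ℕ)
    (I : Fin d → Ideal (PolyRing k n))
    (hlin : ∀ i, IsLinearIdeal (I i))
    (hpair : ∀ i j, i ≠ j → dimOfSet (pZeroLocus (I i) ∩ pZeroLocus (I j)) ≤ 1)
    (ℓ : Ideal (PolyRing k n))
    (hline : dimOfSet (pZeroLocus ℓ) = 1) :
    sheafSupport (tilde (quotIdealGM
      ((⨅ i, ⨅ _ : I i ≤ ℓ, I i) * ∏ i ∈ Finset.univ.filter (fun i => ¬ I i ≤ ℓ), I i)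
      (∏ i, I i)) 0) ⊆ pZeroLocus ℓ := by
  refine sheafSupport_tilde_subset (ProjectiveSpectrum.isClosed_zeroLocus _ _) fun y hy => ?_
  have := y.isPrime
  set T := Finset.univ.filter fun i => I i ≤ ℓ
  obtain ⟨s, hs, hsT⟩ := Ideal.exists_notMem_span_singleton_mul_iInf_le_prod I T
    fun i hi j hj hij => (hlin i).sup_not_le_of_notMem_zeroLocus (hlin j) (hpair i j hij)
      hline.ge (by simpa [T] using hi) (by simpa [T] using hj) hy
  refine subsingleton_locAt_quotIdealGM y hs ?_
  rw [← mul_assoc, ← Finset.prod_filter_mul_prod_filter_not Finset.univ (I · ≤ ℓ)]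
  gcongr
  simpa [T] using hsT

theorem support_of_line_approximation
    {k : Type} [Field k] {n : ℕ} (d : ℕ)
    (I : Fin d → Ideal (PolyRing k n))
    (hlin : ∀ i, IsLinearIdeal (I i))
    (hsat : ∀ i, IsSaturatedIdeal (I i))
    (hpair : ∀ i j, i ≠ j → dimOfSet (pZeroLocus (I i) ∩ pZeroLocus (I j)) ≤ 1)
    (ℓ : Ideal (PolyRing k n))
    (hℓlin : IsLinearIdeal ℓ) (hℓsat : IsSaturatedIdeal ℓ)
    (hline : dimOfSet (pZeroLocus ℓ) = 1)
    (hsupp : pZeroLocus ℓ ⊆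
      sheafSupport (tilde (quotIdealGM (⨅ i, I i) (∏ i, I i)) 0)) :
    sheafSupport (tilde (quotIdealGM
      ((⨅ i, ⨅ _ : I i ≤ ℓ, I i) * ∏ i ∈ Finset.univ.filter (fun i => ¬ I i ≤ ℓ), I i)
      (∏ i, I i)) 0) ⊆ pZeroLocus ℓ :=
  support_of_line_approximation_general d I hlin hpair ℓ hline

end
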